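/- For positive integers K, N₁, N₂ and any M ≥ 0, the convolution identity holds: Σ_{m=0}^{M} C_m^{(K,N₁)} · C_{M−m}^{(K,N₂)} = C_M^{(K,N₁+N₂)}, where C_M^{(K,N)} = (N/(KM+N))·C(KM+N, M). -/

import Mathlib

/-!
The numbers `C_M^{(K,N)}` are characterised by `C_0^{(K,N)} = 1`, `C_{M+1}^{(K,0)} = 0` and the
recursion `C_{M+1}^{(K,N+1)} = C_{M+1}^{(K,N)} + C_M^{(K,N+K)}`, which is Pascal's rule once
`C_{M+1}^{(K,N)}` is written as `C(a, M+1) - K C(a-1, M)` with `a = K(M+1) + N`. The convolution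
then follows by induction on `M` and, inside it, on `N₁`: peeling off the term `m = 0`, the
recursion splits the sum into the convolutions for `(N₁, N₂)` at `M + 1` and for `(N₁ + K, N₂)`
at `M`.
-/

open Finset

/-- `C_M^{(K,N)}` without the division, via `(M+1) C(a, M+1) = a C(a-1, M)`; unlike the closed
formula it takes the right values `0 ^ M` at `N = 0`. -/
def raney (K N : ℕ) : ℕ → ℚ
  | 0 => 1
  | M + 1 => (K * (M + 1) + N).choose (M + 1) - K * (K * (M + 1) + N - 1).choose M

@[simp]
theorem raney_zero_right (K N : ℕ) : raney K N 0 = 1 := rfl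

theorem raney_zero_succ (K M : ℕ) : raney K 0 (M + 1) = 0 := by
  simp [raney, Nat.choose_mul_right M.succ_ne_zero]

theorem raney_succ_succ (K N M : ℕ) :
    raney K (N + 1) (M + 1) = raney K N (M + 1) + raney K (N + K) M := by
  cases M with
  | zero => simp [raney]
  | succ M =>
    have e1 : K * (M + 1 + 1) + (N + 1) = K * (M + 1 + 1) + N + 1 := by ring
    have e2 : K * (M + 1) + (N + K) = K * (M + 1 + 1) + N := by ring
    simp only [raney, e1, e2, Nat.add_sub_cancel]
    set a := K * (M + 1 + 1) + N
    have pascal : (K * a.choose (M + 1) : ℚ) =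
        K * ((a - 1).choose (M + 1) + (a - 1).choose M) := by
      rcases Nat.eq_zero_or_pos K with rfl | hK
      · simp
      · obtain ⟨b, hb⟩ : ∃ b, a = b + 1 := Nat.exists_eq_add_one.mpr (by positivity)
        rw [hb, Nat.choose_succ_succ', Nat.add_sub_cancel, Nat.cast_add, add_comm]
    rw [Nat.choose_succ_succ' a (M + 1)]
    push_cast
    linear_combination -pascal

theorem sum_antidiagonal_raney_mul_raney (K M N₁ N₂ : ℕ) :
    ∑ p ∈ antidiagonal M, raney K N₁ p.1 * raney K N₂ p.2 = raney K (N₁ + N₂) M := by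
  induction M generalizing N₁ with
  | zero => simp
  | succ M ihM =>
    induction N₁ with
    | zero =>
      simp [Nat.sum_antidiagonal_succ, raney_zero_succ]
    | succ N₁ ihN =>
      rw [Nat.sum_antidiagonal_succ] at ihN ⊢
      simp only [raney_succ_succ, add_mul, sum_add_distrib, ihM, raney_zero_right] at ihN ⊢
      rw [add_right_comm N₁ 1 N₂, raney_succ_succ, ← ihN, add_right_comm N₁ K N₂]
      ring

theorem raney_eq (K : ℕ) {N : ℕ} (hN : 0 < N) (M : ℕ) :
    raney K N M = (N : ℚ) / (K * M + N) * (K * M + N).choose M := by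
  cases M with
  | zero => simp [hN.ne']
  | succ M =>
    simp only [raney]
    set a := K * (M + 1) + N with ha
    have ha_pos : 0 < a := by positivity
    have absorption : (a : ℚ) * (a - 1).choose M = a.choose (M + 1) * (M + 1) := by
      have h := Nat.add_one_mul_choose_eq (a - 1) M
      rw [Nat.sub_add_cancel ha_pos] at h
      exact_mod_cast h
    have ha_cast : (a : ℚ) = K * (M + 1) + N := by push_cast [ha]; ring
    push_cast
    rw [← ha_cast]
    field_simp
    linear_combination (-K : ℚ) * absorption + (a.choose (M + 1) : ℚ) * ha_cast

theorem fuss_catalan_convolution_general (K N₁ N₂ : ℕ) (hN₁ : 0 < N₁)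
    (hN₂ : 0 < N₂) (M : ℕ) :
    (∑ m ∈ Finset.range (M + 1),
        ((N₁ : ℚ) / (K * m + N₁) * (Nat.choose (K * m + N₁) m)) *
          ((N₂ : ℚ) / (K * (M - m) + N₂) * (Nat.choose (K * (M - m) + N₂) (M - m)))) =
      ((N₁ + N₂ : ℚ)) / (K * M + (N₁ + N₂)) * (Nat.choose (K * M + (N₁ + N₂)) M) := by
  calc _ = ∑ m ∈ range (M + 1), raney K N₁ m * raney K N₂ (M - m) := by
        refine sum_congr rfl fun m hm => ?_
        rw [raney_eq K hN₁, raney_eq K hN₂, Nat.cast_sub (mem_range_succ_iff.mp hm)]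
    _ = raney K (N₁ + N₂) M :=
        (Nat.sum_antidiagonal_eq_sum_range_succ (fun i j => raney K N₁ i * raney K N₂ j) M).symm.trans
          (sum_antidiagonal_raney_mul_raney K M N₁ N₂)
    _ = _ := by rw [raney_eq K (Nat.add_pos_left hN₁ N₂), Nat.cast_add]

theorem fuss_catalan_convolution (K N₁ N₂ : ℕ) (hK : 0 < K) (hN₁ : 0 < N₁)
    (hN₂ : 0 < N₂) (M : ℕ) :
    (∑ m ∈ Finset.range (M + 1),
        ((N₁ : ℚ) / (K * m + N₁) * (Nat.choose (K * m + N₁) m)) *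
          ((N₂ : ℚ) / (K * (M - m) + N₂) * (Nat.choose (K * (M - m) + N₂) (M - m)))) =
      ((N₁ + N₂ : ℚ)) / (K * M + (N₁ + N₂)) * (Nat.choose (K * M + (N₁ + N₂)) M) :=
  fuss_catalan_convolution_general K N₁ N₂ hN₁ hN₂ M
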